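/- Let X be a nonempty set, R a relation on X, and T : X → X an R-increasing map. If R is locally finitely transitive (for each denumerable subset Y of X there exists k = k(Y) ≥ 2 such that the restriction of R to Y is k-transitive), then R is finitely semi-recurrent: for each orbital admissible x ∈ X(T,R) there exists k(x) ≥ 1 such that R is k(x)-semi-recurrent at x. -/
import Mathlib


open Filter Topology

namespace Paper

/-- powers of a relation: `R⁰ = identity`, `R^{n+1} = Rⁿ ∘ R`. -/
def RelPow {X : Type*} (R : X → X → Prop) : ℕ → X → X → Prop
  | 0, x, y => x = y
  | n + 1, x, z => ∃ y, RelPow R n x y ∧ R y z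

/-- the restriction of `R` to a subset `Z`. -/
def Restrict {X : Type*} (R : X → X → Prop) (Z : Set X) (x y : X) : Prop :=
  x ∈ Z ∧ y ∈ Z ∧ R x y

/-- for `k ≥ 2`, `R` is `k`-transitive: `R^k ⊆ R`. -/
def KTransitive {X : Type*} (R : X → X → Prop) (k : ℕ) : Prop :=
  ∀ x y, RelPow R k x y → R x y

/-- the spectrum `spec(x) = {i ≥ 1 : x R Tⁱx}`. -/
def spec {X : Type*} (R : X → X → Prop) (T : X → X) (x : X) : Set ℕ :=
  {i | 1 ≤ i ∧ R x (T^[i] x)}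

/-- `R` is `k`-semi-recurrent at `x`. -/
def SemiRecurrentAt {X : Type*} (R : X → X → Prop) (T : X → X) (x : X) (k : ℕ) : Prop :=
  ∀ n : ℕ, 1 ≤ n → ∃ q ∈ spec R T x, q ≤ n ∧ n < q + k

/-- `x` is orbital admissible. -/
def OrbAdmissible {X : Type*} (T : X → X) (x : X) : Prop :=
  ∀ i j : ℕ, i ≠ j → T^[i] x ≠ T^[j] x

/-- `R` is finitely semi-recurrent. -/
def FinSemiRecurrent {X : Type*} (R : X → X → Prop) (T : X → X) : Prop :=
  ∀ x : X, R x (T x) → OrbAdmissible T x → ∃ k : ℕ, 1 ≤ k ∧ SemiRecurrentAt R T x k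

/-- a locally finitely transitive relation is finitely semi-recurrent
(relative to any `R`-increasing map `T`). -/
theorem finSemiRecurrent_of_locallyFinitelyTransitive {X : Type*} [Nonempty X]
    (R : X → X → Prop) (T : X → X)
    (hinc : ∀ x y : X, R x y → R (T x) (T y))
    (hloc : ∀ Y : Set X, Y.Countable → Y.Infinite →
      ∃ k : ℕ, 2 ≤ k ∧ KTransitive (Restrict R Y) k) :
    FinSemiRecurrent R T := by
  intro x hx hadm
  set Y : Set X := Set.range (fun i => T^[i] x) with hY
  have hinj : Function.Injective (fun i => T^[i] x) := by
    intro i j h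
    by_contra hij
    exact hadm i j hij h
  obtain ⟨k, hk2, htr⟩ := hloc Y (Set.countable_range _)
    (Set.infinite_range_of_injective hinj)
  refine ⟨k, by omega, ?_⟩
  have hedge : ∀ i : ℕ, R (T^[i] x) (T^[i+1] x) := by
    intro i
    induction i with
    | zero => simpa using hx
    | succ n ih =>
      rw [Function.iterate_succ_apply', Function.iterate_succ_apply']
      exact hinc _ _ ih
  have hmem : ∀ i : ℕ, T^[i] x ∈ Y := fun i => ⟨i, rfl⟩
  have hstep : ∀ q ∈ spec R T x, q + (k - 1) ∈ spec R T x := by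
    intro q hq
    have hpath : ∀ m : ℕ, RelPow (Restrict R Y) (m + 1) x (T^[q + m] x) := by
      intro m
      induction m with
      | zero => exact ⟨x, rfl, hmem 0, hmem q, hq.2⟩
      | succ n ih =>
        exact ⟨T^[q + n] x, ih, hmem _, hmem _, hedge (q + n)⟩
    have hk1 : k - 1 + 1 = k := by omega
    have h := htr x (T^[q + (k - 1)] x) (by rw [← hk1]; exact hpath (k - 1))
    exact ⟨by have := hq.1; omega, h.2.2⟩
  have hspec : ∀ m : ℕ, 1 + m * (k - 1) ∈ spec R T x := by
    intro m
    induction m with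
    | zero =>
      have h1 : (1 : ℕ) + 0 * (k - 1) = 1 := by ring
      rw [h1]
      exact ⟨le_refl 1, by simpa using hx⟩
    | succ n ih =>
      have := hstep _ ih
      have heq : 1 + n * (k - 1) + (k - 1) = 1 + (n + 1) * (k - 1) := by ring
      rwa [heq] at this
  intro n hn
  have hdm : ((n - 1) / (k - 1)) * (k - 1) + (n - 1) % (k - 1) = n - 1 := by
    rw [Nat.mul_comm]; exact Nat.div_add_mod _ _
  have hr : (n - 1) % (k - 1) < k - 1 := Nat.mod_lt _ (by omega)
  refine ⟨1 + ((n - 1) / (k - 1)) * (k - 1), hspec _, by omega, by omega⟩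

end Paper
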